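/- If a connected graph is partitioned into K connected subgraphs each of diameter at most D_S, and the quotient graph on subgraphs (with an edge between two subgraphs whenever some cut edge joins them) is connected with diameter at most D_Q, then the GPNN schedule with T_S = D_S and T_C = 1 solves broadcast within at most D_Q + 1 outer loop iterations. -/

import Mathlib

/-!
Information moves one edge per synchronous step, so `D_S` intra-block steps carry it between any
two nodes of a block, and one cut step carries it across a quotient edge. Along a quotient walk
`L v = i₀ ~ i₁ ~ ⋯ ~ i_m = L u` with `m ≤ D_Q`, induction on the walk shows that after `t` outer
iterations followed by one intra-block phase the information of `u` fills block `i_{m-t}`; for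
`t = m` that block contains `v`, and the cut step of iteration `m + 1` keeps it there.
-/

/-- One synchronous information-propagation step over the edge relation `F`:
node `v`'s information set becomes its old set united with the information
sets of all its `F`-neighbors. -/
def infoStep {V : Type*} (F : V → V → Prop) (I : V → Set V) : V → Set V :=
  fun v => I v ∪ ⋃ u ∈ {u | F u v}, I u

/-- The quotient graph of a partition `L : V → Fin K`: subgraphs `i ≠ j` are
adjacent iff some (cut) edge of `G` joins block `i` to block `j`. -/
def quotientGraph {V : Type*} (G : SimpleGraph V) (K : ℕ) (L : V → Fin K) :
    SimpleGraph (Fin K) where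
  Adj i j := i ≠ j ∧ ∃ u v, G.Adj u v ∧ L u = i ∧ L v = j
  symm := by
    constructor
    rintro i j ⟨hij, u, v, huv, hu, hv⟩
    exact ⟨hij.symm, v, u, huv.symm, hv, hu⟩
  loopless := by
    constructor
    rintro i ⟨hij, -⟩
    exact hij rfl

open SimpleGraph

section

variable {V : Type*}

theorem id_le_infoStep (F : V → V → Prop) : id ≤ infoStep F :=
  fun _ _ => Set.subset_union_left

theorem subset_infoStep_of_rel (F : V → V → Prop) (I : V → Set V) {u v : V} (h : F u v) :
    I u ⊆ infoStep F I v :=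
  fun _ hx => Or.inr (Set.mem_biUnion h hx)

theorem subset_infoStep_iterate_length_of_walk {G : SimpleGraph V} (F : V → V → Prop)
    {x y : V} (w : G.Walk x y) (hw : ∀ d ∈ w.darts, F d.fst d.snd) (I : V → Set V) :
    I x ⊆ (infoStep F)^[w.length] I y := by
  induction w generalizing I with
  | nil => exact subset_rfl
  | cons h p ih =>
    rw [Walk.darts_cons, List.forall_mem_cons] at hw
    rw [Walk.length_cons, Function.iterate_succ_apply]
    exact (subset_infoStep_of_rel F I hw.1).trans (ih hw.2 _)

theorem subset_infoStep_iterate_of_walk {G : SimpleGraph V} (F : V → V → Prop)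
    {x y : V} (w : G.Walk x y) (hw : ∀ d ∈ w.darts, F d.fst d.snd) {n : ℕ} (hn : w.length ≤ n)
    (I : V → Set V) : I x ⊆ (infoStep F)^[n] I y :=
  (subset_infoStep_iterate_length_of_walk F w hw I).trans
    (Function.monotone_iterate_of_id_le (id_le_infoStep F) hn I y)

variable {G : SimpleGraph V} {K : ℕ} {L : V → Fin K}

theorem subset_intra_iterate_of_same_block {D_S : ℕ}
    (hblock : ∀ u v : V, L u = L v →
      ∃ w : G.Walk u v, w.length ≤ D_S ∧ ∀ x ∈ w.support, L x = L u)
    (I : V → Set V) {u v : V} (h : L u = L v) :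
    I u ⊆ (infoStep fun a b => G.Adj a b ∧ L a = L b)^[D_S] I v := by
  obtain ⟨w, hlen, hsupp⟩ := hblock u v h
  refine subset_infoStep_iterate_of_walk _ w (fun d hd => ⟨d.adj, ?_⟩) hlen I
  rw [hsupp _ (w.dart_fst_mem_support_of_mem_darts hd),
    hsupp _ (w.dart_snd_mem_support_of_mem_darts hd)]

theorem subset_intra_outer_iterate_of_quotient_walk {S : (V → Set V) → V → Set V}
    (hS : ∀ (I : V → Set V) (u v : V), L u = L v → I u ⊆ S I v)
    {i j : Fin K} (p : (quotientGraph G K L).Walk i j) (I : V → Set V) {u v : V}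
    (hu : L u = j) (hv : L v = i) :
    I u ⊆ S ((fun J => infoStep (fun a b => G.Adj a b ∧ L a ≠ L b) (S J))^[p.length] I) v := by
  induction p generalizing v with
  | nil => exact hS I u v (hu.trans hv.symm)
  | cons hik q ih =>
    rw [Walk.length_cons, Function.iterate_succ_apply']
    obtain ⟨hne, a, b, hab, ha, hb⟩ := hik
    have hcut : G.Adj b a ∧ L b ≠ L a := ⟨hab.symm, by rw [ha, hb]; exact hne.symm⟩
    exact (ih hu hb).trans <|
      (subset_infoStep_of_rel (fun x y => G.Adj x y ∧ L x ≠ L y) _ hcut).trans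
        (hS _ a v (ha.trans hv.symm))

end

theorem gpnn_broadcast_bound_general {V : Type*} (G : SimpleGraph V)
    (K : ℕ) (L : V → Fin K) (D_S D_Q : ℕ)
    (hblock : ∀ u v : V, L u = L v →
      ∃ w : G.Walk u v, w.length ≤ D_S ∧ ∀ x ∈ w.support, L x = L u)
    (hquot : ∀ i j : Fin K,
      ∃ p : (quotientGraph G K L).Walk i j, p.length ≤ D_Q) :
    let intra : (V → Set V) → V → Set V :=
      infoStep (fun u v => G.Adj u v ∧ L u = L v)
    let inter : (V → Set V) → V → Set V :=
      infoStep (fun u v => G.Adj u v ∧ L u ≠ L v)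
    let outer : (V → Set V) → V → Set V := fun I => inter (intra^[D_S] I)
    ∀ v : V, outer^[D_Q + 1] (fun v => {v}) v = Set.univ := by
  intro intra inter outer v
  have id_le_outer : id ≤ outer := fun I =>
    (Function.id_le_iterate_of_id_le (id_le_infoStep _) D_S I).trans (id_le_infoStep _ _)
  refine Set.eq_univ_of_forall fun u => ?_
  obtain ⟨p, hp⟩ := hquot (L v) (L u)
  have reached : u ∈ intra^[D_S] (outer^[p.length] fun v => {v}) v :=
    subset_intra_outer_iterate_of_quotient_walk (subset_intra_iterate_of_same_block hblock) p
      _ rfl rfl rfl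
  have reached_outer : u ∈ outer^[p.length + 1] (fun v => {v}) v := by
    rw [Function.iterate_succ_apply']
    exact id_le_infoStep _ _ v reached
  exact Function.monotone_iterate_of_id_le id_le_outer (Nat.succ_le_succ hp) _ v reached_outer

/-- If a connected graph is partitioned into `K` blocks, each inducing a
connected subgraph of diameter at most `D_S` (between any two nodes of a block
there is a walk of length ≤ `D_S` staying inside the block), and the quotient
graph is connected with diameter at most `D_Q`, then the GPNN schedule with
`T_S = D_S` intra-subgraph steps and `T_C = 1` inter-subgraph step per outer
loop solves broadcast within `D_Q + 1` outer iterations: every node's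
information set becomes all of `V`. -/
theorem gpnn_broadcast_bound {V : Type*} [Fintype V] (G : SimpleGraph V)
    (hG : G.Connected) (K : ℕ) (L : V → Fin K) (D_S D_Q : ℕ)
    (hblock : ∀ u v : V, L u = L v →
      ∃ w : G.Walk u v, w.length ≤ D_S ∧ ∀ x ∈ w.support, L x = L u)
    (hquot : ∀ i j : Fin K,
      ∃ p : (quotientGraph G K L).Walk i j, p.length ≤ D_Q) :
    let intra : (V → Set V) → V → Set V :=
      infoStep (fun u v => G.Adj u v ∧ L u = L v)
    let inter : (V → Set V) → V → Set V :=
      infoStep (fun u v => G.Adj u v ∧ L u ≠ L v)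
    let outer : (V → Set V) → V → Set V := fun I => inter (intra^[D_S] I)
    ∀ v : V, outer^[D_Q + 1] (fun v => {v}) v = Set.univ :=
  gpnn_broadcast_bound_general G K L D_S D_Q hblock hquot
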